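/- arXiv:1408.0195 — 6 statements merged into one kernel-verified Lean document; each statement's English description precedes it below -/
import Mathlib

section
/- If τ is a Salem number of degree d, then τⁿ is also a Salem number of degree d for every positive integer n. -/
/-- `z : ℂ` is a conjugate of the real algebraic number `τ`:
it is a complex root of the minimal polynomial of `τ` over `ℚ`. -/
def IsConjugateOf (z : ℂ) (τ : ℝ) : Prop :=
  Polynomial.aeval z (minpoly ℚ τ) = 0

/-- A Salem number: a real algebraic integer `τ > 1`, of degree at least 4,
conjugate to `τ⁻¹`, all of whose conjugates other than `τ` and `τ⁻¹`
have modulus 1. -/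
def IsSalem (τ : ℝ) : Prop :=
  1 < τ ∧ IsIntegral ℤ τ ∧ 4 ≤ (minpoly ℚ τ).natDegree ∧
    IsConjugateOf ((τ : ℂ))⁻¹ τ ∧
    ∀ z : ℂ, IsConjugateOf z τ → z ≠ (τ : ℂ) → z ≠ ((τ : ℂ))⁻¹ → ‖z‖ = 1

/-!
A conjugate `z` of `τ` over `ℚ(τⁿ)` is a conjugate of `τ` over `ℚ` with `zⁿ = τⁿ`, so `‖z‖ = τ`,
and the Salem condition forces `z = τ`. So the separable minimal polynomial of `τ` over `ℚ(τⁿ)`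
has a single root, hence degree one: `ℚ(τⁿ) = ℚ(τ)` and the degrees agree. Extending an embedding
of `ℚ(τⁿ)` into `ℂ` to `ℚ(τ)` shows that the conjugates of `τⁿ` are `n`-th powers of conjugates
of `τ`, which gives the conditions on the conjugates of `τⁿ`.
-/

open Polynomial IntermediateField

section Minpoly

variable {F E Ω : Type*} [Field F]

theorem aeval_pow_minpoly_pow_eq_zero [CommRing E] [Algebra F E] [CommRing Ω] [Algebra F Ω]
    {x : E} {z : Ω} (hz : aeval z (minpoly F x) = 0) (n : ℕ) :
    aeval (z ^ n) (minpoly F (x ^ n)) = 0 := by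
  obtain ⟨r, hr⟩ := minpoly.dvd F x (p := (minpoly F (x ^ n)).comp (X ^ n)) <| by
    rw [aeval_comp, aeval_X_pow, minpoly.aeval]
  simpa [aeval_comp, hz] using congrArg (aeval z) hr

theorem eval_map_eq_zero_of_mem_roots_map_minpoly [CommRing E] [Algebra F E] [CommRing Ω]
    [IsDomain Ω] (f : F →+* Ω) {x : E} {p : F[X]} (hp : aeval x p = 0) {z : Ω}
    (hz : z ∈ ((minpoly F x).map f).roots) : (p.map f).eval z = 0 :=
  eval_eq_zero_of_dvd_of_eval_eq_zero (Polynomial.map_dvd f (minpoly.dvd F x hp))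
    (isRoot_of_mem_roots hz)

variable [Field E] [Algebra F E] [Field Ω] [IsAlgClosed Ω]

theorem mem_range_algebraMap_of_roots_map_minpoly_eq (f : F →+* Ω) {x : E}
    (hx : IsSeparable F x) (a : Ω) (h : ∀ z ∈ ((minpoly F x).map f).roots, z = a) :
    x ∈ (algebraMap F E).range := by
  have hle : ((minpoly F x).map f).roots ≤ {a} :=
    (Multiset.le_iff_subset (nodup_roots (Separable.map hx))).mpr fun z hz ↦
      Multiset.mem_singleton.mpr (h z hz)
  have hcard := (Multiset.card_le_card hle).trans_eq (Multiset.card_singleton a)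
  have hdeg := (IsAlgClosed.splits ((minpoly F x).map f)).natDegree_eq_card_roots
  rw [natDegree_map] at hdeg
  have hpos := minpoly.natDegree_pos hx.isIntegral
  exact minpoly.natDegree_eq_one_iff.mp (by omega)

variable [Algebra F Ω]

theorem exists_aeval_minpoly_eq_zero_and_pow_eq {x : E} (hx : IsIntegral F x) (n : ℕ) {w : Ω}
    (hw : aeval w (minpoly F (x ^ n)) = 0) :
    ∃ z : Ω, aeval z (minpoly F x) = 0 ∧ z ^ n = w := by
  obtain ⟨φ, hφ⟩ := exists_algHom_adjoin_of_splits_of_aeval (S := {x})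
    (fun s hs ↦ by rw [Set.mem_singleton_iff.mp hs]; exact ⟨hx, IsAlgClosed.splits _⟩)
    (pow_mem (mem_adjoin_simple_self F x) n) hw
  refine ⟨φ (AdjoinSimple.gen F x), ?_, ?_⟩
  · rw [aeval_algHom_apply, ← minpoly_gen, minpoly.aeval, map_zero]
  · rw [← map_pow, ← hφ]
    rfl

end Minpoly

theorem isConjugateOf_and_pow_eq_of_mem_roots {x : ℝ} {n : ℕ} {z : ℂ}
    (hz : z ∈ ((minpoly ℚ⟮x ^ n⟯ x).map (Complex.ofRealHom.comp (algebraMap ℚ⟮x ^ n⟯ ℝ))).roots) :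
    IsConjugateOf z x ∧ z ^ n = (x : ℂ) ^ n := by
  constructor
  · have hp : aeval x ((minpoly ℚ x).map (algebraMap ℚ ℚ⟮x ^ n⟯)) = 0 := by
      rw [aeval_map_algebraMap, minpoly.aeval]
    have := eval_map_eq_zero_of_mem_roots_map_minpoly _ hp hz
    rwa [Polynomial.map_map, Subsingleton.elim (RingHom.comp _ _) (algebraMap ℚ ℂ),
      eval_map_algebraMap] at this
  · have := eval_map_eq_zero_of_mem_roots_map_minpoly _
      (p := X ^ n - C (AdjoinSimple.gen ℚ (x ^ n))) (by simp) hz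
    simpa [sub_eq_zero] using this

namespace IsSalem

variable {τ : ℝ}

theorem eq_of_norm_eq (hτ : IsSalem τ) {z : ℂ} (hz : IsConjugateOf z τ) (habs : ‖z‖ = τ) :
    z = τ := by
  obtain ⟨hτ1, -, -, -, hcirc⟩ := hτ
  by_contra hne
  by_cases hinv : z = (τ : ℂ)⁻¹
  · rw [hinv, norm_inv, Complex.norm_real, Real.norm_of_nonneg (by positivity)] at habs
    nlinarith [inv_mul_cancel₀ (by positivity : τ ≠ 0)]
  · linarith [hcirc z hz hne hinv]

theorem mem_adjoin_pow (hτ : IsSalem τ) {n : ℕ} (hn : n ≠ 0) : τ ∈ ℚ⟮τ ^ n⟯ := by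
  obtain ⟨y, hy⟩ := mem_range_algebraMap_of_roots_map_minpoly_eq
    (Complex.ofRealHom.comp (algebraMap ℚ⟮τ ^ n⟯ ℝ))
    (minpoly.irreducible hτ.2.1.tower_top).separable (τ : ℂ) fun z hz ↦ by
      obtain ⟨hconj, hpow⟩ := isConjugateOf_and_pow_eq_of_mem_roots hz
      have hτ0 : 0 ≤ τ := (zero_lt_one.trans hτ.1).le
      refine hτ.eq_of_norm_eq hconj <| (pow_left_inj₀ (norm_nonneg z) hτ0 hn).mp ?_
      rw [← norm_pow, hpow, norm_pow, Complex.norm_real, Real.norm_of_nonneg hτ0]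
  have hyK : algebraMap ℚ⟮τ ^ n⟯ ℝ y ∈ ℚ⟮τ ^ n⟯ := y.2
  rwa [hy] at hyK

theorem adjoin_pow (hτ : IsSalem τ) {n : ℕ} (hn : n ≠ 0) :
    (ℚ⟮τ ^ n⟯ : IntermediateField ℚ ℝ) = ℚ⟮τ⟯ :=
  le_antisymm (adjoin_simple_le_iff.mpr (pow_mem (mem_adjoin_simple_self ℚ τ) n))
    (adjoin_simple_le_iff.mpr (hτ.mem_adjoin_pow hn))

theorem natDegree_minpoly_pow (hτ : IsSalem τ) {n : ℕ} (hn : n ≠ 0) :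
    (minpoly ℚ (τ ^ n)).natDegree = (minpoly ℚ τ).natDegree := by
  have hint : IsIntegral ℚ τ := hτ.2.1.tower_top
  rw [← adjoin.finrank hint, ← adjoin.finrank (hint.pow n), hτ.adjoin_pow hn]

end IsSalem

theorem salem_pow (τ : ℝ) (d : ℕ) (hτ : IsSalem τ) (hd : (minpoly ℚ τ).natDegree = d)
    (n : ℕ) (hn : 1 ≤ n) :
    IsSalem (τ ^ n) ∧ (minpoly ℚ (τ ^ n)).natDegree = d := by
  have hn0 : n ≠ 0 := by omega
  have hdeg := hτ.natDegree_minpoly_pow hn0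
  obtain ⟨hτ1, hint, hdeg4, hinv, hcirc⟩ := hτ
  have hcast : ((τ ^ n : ℝ) : ℂ) = (τ : ℂ) ^ n := Complex.ofReal_pow τ n
  refine ⟨⟨one_lt_pow₀ hτ1 hn0, hint.pow n, hdeg ▸ hdeg4, ?_, ?_⟩, hdeg.trans hd⟩
  · rw [IsConjugateOf, hcast, ← inv_pow]
    exact aeval_pow_minpoly_pow_eq_zero hinv n
  · intro w hw hwτ hwτinv
    obtain ⟨z, hz, rfl⟩ := exists_aeval_minpoly_eq_zero_and_pow_eq (hint.tower_top (A := ℚ)) n hw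
    have hzτ : z ≠ τ := by rintro rfl; exact hwτ hcast.symm
    have hzτinv : z ≠ (τ : ℂ)⁻¹ := by rintro rfl; exact hwτinv (by rw [hcast, inv_pow])
    rw [norm_pow, hcirc z hz hzτ hzτinv, one_pow]
end

section
/- Let α be an irrational real algebraic integer with α > 2, all of whose conjugates other than α lie in the open real interval (−2, 2). Then the real number τ > 1 determined by τ + τ⁻¹ = α (i.e., the larger root of z² − αz + 1 = 0) is a Salem number. -/
/-!
Put `p = minpoly ℚ α`, of degree `n ≥ 2`, and `s(X) = Xⁿ p(X + X⁻¹)`, a monic polynomial of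
degree `2n` vanishing at `τ` and `τ⁻¹`; the same construction applied to a monic integer
polynomial of `α` shows that `τ` is an algebraic integer. Since `τ² - ατ + 1 = 0`, the degree
of `τ` is `2n` unless `τ ∈ ℚ(α)`. That is impossible: writing `τ = Q(α)` with `Q ∈ ℚ[X]`,
`p` divides `Q² - XQ + 1`, so `Q(β)` is a real root of `X² - βX + 1` for a conjugate
`β ∈ (-2, 2)` of `α`. Hence `minpoly ℚ τ = s`, and for every conjugate `z` of `τ` the number
`z + z⁻¹` is a conjugate of `α`: either `α`, so `z ∈ {τ, τ⁻¹}`, or a real `β ∈ (-2, 2)`,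
which forces `|z| = 1`.
-/

open Polynomial IntermediateField

namespace Polynomial

variable {R : Type*} [CommRing R]

/-- `Xⁿ f(X + X⁻¹)` for `n = f.natDegree`, written without division. -/
noncomputable def reciprocalTransform (f : R[X]) : R[X] :=
  ∑ i ∈ Finset.range (f.natDegree + 1), C (f.coeff i) * (X ^ 2 + 1) ^ i * X ^ (f.natDegree - i)

theorem natDegree_reciprocalTransform_term_le (a : R) (i n : ℕ) :
    (C a * (X ^ 2 + 1) ^ i * X ^ (n - i) : R[X]).natDegree ≤ 2 * i + (n - i) := by
  compute_degree
  omega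

theorem natDegree_reciprocalTransform_le (f : R[X]) :
    f.reciprocalTransform.natDegree ≤ 2 * f.natDegree :=
  natDegree_sum_le_of_forall_le _ _ fun i hi =>
    (natDegree_reciprocalTransform_term_le _ _ _).trans (by rw [Finset.mem_range] at hi; omega)

theorem coeff_reciprocalTransform_two_mul {f : R[X]} (hf : f.Monic) :
    f.reciprocalTransform.coeff (2 * f.natDegree) = 1 := by
  rw [reciprocalTransform, finsetSum_coeff, Finset.sum_eq_single_of_mem _
    (Finset.self_mem_range_succ _), hf.coeff_natDegree, Nat.sub_self]
  · simp only [map_one, one_mul, pow_zero, mul_one]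
    compute_degree <;> simp [mul_comm]
  · intro i hi hin
    refine coeff_eq_zero_of_natDegree_lt ((natDegree_reciprocalTransform_term_le _ _ _).trans_lt ?_)
    rw [Finset.mem_range] at hi
    omega

theorem Monic.reciprocalTransform {f : R[X]} (hf : f.Monic) : f.reciprocalTransform.Monic :=
  monic_of_natDegree_le_of_coeff_eq_one _ (natDegree_reciprocalTransform_le f)
    (coeff_reciprocalTransform_two_mul hf)

theorem Monic.natDegree_reciprocalTransform [Nontrivial R] {f : R[X]} (hf : f.Monic) :
    f.reciprocalTransform.natDegree = 2 * f.natDegree :=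
  natDegree_eq_of_le_of_coeff_ne_zero (natDegree_reciprocalTransform_le f)
    (by simp [coeff_reciprocalTransform_two_mul hf])

theorem aeval_reciprocalTransform {K : Type*} [Field K] [Algebra R K] (f : R[X]) {z : K}
    (hz : z ≠ 0) : aeval z f.reciprocalTransform = z ^ f.natDegree * aeval (z + z⁻¹) f := by
  rw [reciprocalTransform, map_sum, aeval_eq_sum_range, Finset.mul_sum]
  refine Finset.sum_congr rfl fun i hi => ?_
  have hin : i ≤ f.natDegree := Nat.lt_succ_iff.mp (Finset.mem_range.mp hi)
  have hz' : z + z⁻¹ = (z ^ 2 + 1) * z⁻¹ := by field_simp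
  simp only [map_mul, aeval_C, map_pow, map_add, aeval_X, map_one, Algebra.smul_def]
  rw [hz', mul_pow, pow_sub₀ z hz hin, inv_pow]
  ring

theorem aeval_reciprocalTransform_eq_zero_iff {K : Type*} [Field K] [Algebra R K] (f : R[X])
    {z : K} (hz : z ≠ 0) : aeval z f.reciprocalTransform = 0 ↔ aeval (z + z⁻¹) f = 0 := by
  simp [aeval_reciprocalTransform f hz, hz]

end Polynomial

theorem IsIntegral.of_add_inv_eq {R K : Type*} [CommRing R] [Field K] [Algebra R K] {α τ : K}
    (hα : IsIntegral R α) (hτ : τ ≠ 0) (h : τ + τ⁻¹ = α) : IsIntegral R τ := by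
  obtain ⟨f, hf, hfα⟩ := hα
  refine ⟨f.reciprocalTransform, hf.reciprocalTransform, ?_⟩
  rw [← aeval_def, aeval_reciprocalTransform f hτ, h, aeval_def, hfα, mul_zero]

theorem eq_or_eq_inv_of_add_inv_eq_add_inv {K : Type*} [Field K] {z w : K} (hz : z ≠ 0)
    (hw : w ≠ 0) (h : z + z⁻¹ = w + w⁻¹) : z = w ∨ z = w⁻¹ := by
  have hfactor : (z - w) * (w * z - 1) = 0 := by
    field_simp at h
    linear_combination h
  rcases mul_eq_zero.1 hfactor with h | h
  · exact Or.inl (sub_eq_zero.1 h)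
  · exact Or.inr (eq_inv_of_mul_eq_one_right (sub_eq_zero.1 h))

theorem sq_sub_mul_add_one_pos {b : ℝ} (h₁ : -2 < b) (h₂ : b < 2) (r : ℝ) :
    0 < r ^ 2 - b * r + 1 := by
  nlinarith [sq_nonneg (2 * r - b)]

theorem Complex.norm_eq_one_of_add_inv_eq {z : ℂ} (hz : z ≠ 0) {b : ℝ} (h₁ : -2 < b)
    (h₂ : b < 2) (h : z + z⁻¹ = b) : ‖z‖ = 1 := by
  have hquad : z * z + 1 = b * z := by
    rw [← h]
    field_simp
  obtain ⟨hre, him⟩ := Complex.ext_iff.1 hquad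
  simp only [Complex.add_re, Complex.add_im, Complex.mul_re, Complex.mul_im, Complex.one_re,
    Complex.one_im, Complex.ofReal_re, Complex.ofReal_im] at hre him
  have hzim : z.im ≠ 0 := by
    intro h0
    rw [h0] at hre
    nlinarith [sq_sub_mul_add_one_pos h₁ h₂ z.re]
  have hb : b = 2 * z.re := mul_right_cancel₀ hzim (by linarith)
  rw [← pow_eq_one_iff_of_nonneg (norm_nonneg z) two_ne_zero, Complex.sq_norm,
    Complex.normSq_apply]
  nlinarith

theorem Irrational.two_le_natDegree_minpoly {x : ℝ} (hx : Irrational x) (hint : IsIntegral ℚ x) :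
    2 ≤ (minpoly ℚ x).natDegree :=
  (minpoly.two_le_natDegree_iff hint).2 fun ⟨q, hq⟩ => hx ⟨q, by simpa using hq⟩

theorem exists_aeval_eq_zero_ne {K L : Type*} [Field K] [Field L] [IsAlgClosed L] [Algebra K L]
    {p : K[X]} (hp : p.Separable) (hdeg : 2 ≤ p.natDegree) (x : L) :
    ∃ z : L, aeval z p = 0 ∧ z ≠ x := by
  have hcard : 1 < (p.rootSet L).ncard := by
    rw [Set.ncard_eq_toFinset_card', Set.toFinset_card,
      card_rootSet_eq_natDegree hp (IsAlgClosed.splits _)]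
    omega
  obtain ⟨z, hz, hzx⟩ := Set.exists_ne_of_one_lt_ncard hcard x
  exact ⟨z, (mem_rootSet.1 hz).2, hzx⟩

theorem notMem_adjoin_of_root_sq_sub_mul_add_one {α b τ : ℝ} (hα : IsIntegral ℚ α)
    (hb : aeval b (minpoly ℚ α) = 0) (h₁ : -2 < b) (h₂ : b < 2) (hτ : τ ^ 2 - α * τ + 1 = 0) :
    τ ∉ ℚ⟮α⟯ := by
  intro hmem
  rw [← mem_toSubalgebra, adjoin_simple_toSubalgebra_of_isAlgebraic hα.isAlgebraic,
    Algebra.adjoin_singleton_eq_range_aeval] at hmem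
  obtain ⟨Q, rfl⟩ := hmem
  have hdvd : minpoly ℚ α ∣ Q ^ 2 - X * Q + 1 := minpoly.dvd ℚ α (by simpa using hτ)
  have hQb := aeval_eq_zero_of_dvd_aeval_eq_zero hdvd hb
  simp only [map_add, map_sub, map_mul, map_pow, aeval_X, map_one] at hQb
  exact (sq_sub_mul_add_one_pos h₁ h₂ _).ne' hQb

theorem minpoly_eq_reciprocalTransform {K L : Type*} [Field K] [Field L] [Algebra K L]
    {α τ : L} (hα : IsIntegral K α) (hτ : τ ≠ 0) (h : τ + τ⁻¹ = α) (hτα : τ ∉ K⟮α⟯) :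
    minpoly K τ = (minpoly K α).reciprocalTransform := by
  have hτint : IsIntegral K τ := hα.of_add_inv_eq hτ h
  have hdvd : minpoly K τ ∣ (minpoly K α).reciprocalTransform :=
    minpoly.dvd K τ (by rw [aeval_reciprocalTransform _ hτ, h, minpoly.aeval, mul_zero])
  have hle : K⟮α⟯ ≤ K⟮τ⟯ := by
    rw [adjoin_simple_le_iff, ← h]
    exact add_mem (mem_adjoin_simple_self K τ) (inv_mem (mem_adjoin_simple_self K τ))
  have htower := finrank_bot_mul_relfinrank hle
  rw [adjoin.finrank hα, adjoin.finrank hτint] at htower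
  have hk : relfinrank K⟮α⟯ K⟮τ⟯ ≠ 1 :=
    fun h1 => hτα (relfinrank_eq_one_iff.1 h1 (mem_adjoin_simple_self K τ))
  have hk0 : relfinrank K⟮α⟯ K⟮τ⟯ ≠ 0 := by
    rintro h0
    rw [h0, mul_zero] at htower
    exact (minpoly.natDegree_pos hτint).ne htower
  refine (eq_of_monic_of_dvd_of_natDegree_le (minpoly.monic hτint)
    (minpoly.monic hα).reciprocalTransform hdvd ?_).symm
  rw [(minpoly.monic hα).natDegree_reciprocalTransform, ← htower, mul_comm 2]
  exact Nat.mul_le_mul_left _ (show 2 ≤ relfinrank K⟮α⟯ K⟮τ⟯ by omega)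

theorem isConjugateOf_ofReal_iff {x τ : ℝ} :
    IsConjugateOf x τ ↔ aeval x (minpoly ℚ τ) = 0 := by
  rw [IsConjugateOf, ← Complex.coe_algebraMap, aeval_algebraMap_apply, map_eq_zero]

theorem isConjugateOf_self (x : ℝ) : IsConjugateOf x x :=
  isConjugateOf_ofReal_iff.2 (minpoly.aeval ℚ x)

theorem IsConjugateOf.ne_zero {z : ℂ} {τ : ℝ} (h : IsConjugateOf z τ) (hτ : IsIntegral ℚ τ)
    (hτ0 : τ ≠ 0) : z ≠ 0 := by
  rintro rfl
  rw [← Complex.ofReal_zero, isConjugateOf_ofReal_iff, ← coeff_zero_eq_aeval_zero',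
    map_eq_zero] at h
  exact minpoly.coeff_zero_ne_zero hτ hτ0 h

theorem isConjugateOf_iff_add_inv {α τ : ℝ}
    (hmin : minpoly ℚ τ = (minpoly ℚ α).reciprocalTransform) {z : ℂ} (hz : z ≠ 0) :
    IsConjugateOf z τ ↔ IsConjugateOf (z + z⁻¹) α := by
  rw [IsConjugateOf, hmin]
  exact aeval_reciprocalTransform_eq_zero_iff _ hz

theorem salem_of_totally_real_general (α : ℝ) (hirr : Irrational α) (hint : IsIntegral ℤ α)
    (hconj : ∀ z : ℂ, IsConjugateOf z α → z ≠ (α : ℂ) →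
      z.im = 0 ∧ -2 < z.re ∧ z.re < 2)
    (τ : ℝ) (hτ : 1 < τ) (heq : τ + τ⁻¹ = α) :
    IsSalem τ := by
  have hτ0 : τ ≠ 0 := by positivity
  have hQα : IsIntegral ℚ α := hint.tower_top
  have hτint : IsIntegral ℤ τ := hint.of_add_inv_eq hτ0 heq
  have hn := hirr.two_le_natDegree_minpoly hQα
  obtain ⟨β, hβ, hβα⟩ := exists_aeval_eq_zero_ne (minpoly.irreducible hQα).separable hn (α : ℂ)
  obtain ⟨hβim, hβ₁, hβ₂⟩ := hconj β hβ hβα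
  have hτ_notMem : τ ∉ ℚ⟮α⟯ := by
    refine notMem_adjoin_of_root_sq_sub_mul_add_one hQα ?_ hβ₁ hβ₂ ?_
    · rwa [← isConjugateOf_ofReal_iff, show (β.re : ℂ) = β from Complex.ext rfl (by simp [hβim])]
    · rw [← heq]; field_simp; ring
  have hmin := minpoly_eq_reciprocalTransform hQα hτ0 heq hτ_notMem
  have heqC : (τ : ℂ) + (τ : ℂ)⁻¹ = α := by exact_mod_cast heq
  refine ⟨hτ, hτint, ?_, ?_, fun z hz hzτ hzτ' => ?_⟩
  · rw [hmin, (minpoly.monic hQα).natDegree_reciprocalTransform]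
    omega
  · rw [isConjugateOf_iff_add_inv hmin (by simpa using hτ0), inv_inv, add_comm, heqC]
    exact isConjugateOf_self α
  have hz0 : z ≠ 0 := hz.ne_zero hτint.tower_top hτ0
  rw [isConjugateOf_iff_add_inv hmin hz0] at hz
  obtain hzα | hzα := eq_or_ne (z + z⁻¹) α
  · rw [← heqC] at hzα
    exact ((eq_or_eq_inv_of_add_inv_eq_add_inv hz0 (by simpa using hτ0) hzα).elim hzτ hzτ').elim
  obtain ⟨him, h₁, h₂⟩ := hconj _ hz hzα
  exact Complex.norm_eq_one_of_add_inv_eq hz0 h₁ h₂ (Complex.ext rfl (by simpa using him))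

theorem salem_of_totally_real (α : ℝ) (hirr : Irrational α) (hint : IsIntegral ℤ α)
    (hα : 2 < α)
    (hconj : ∀ z : ℂ, IsConjugateOf z α → z ≠ (α : ℂ) →
      z.im = 0 ∧ -2 < z.re ∧ z.re < 2)
    (τ : ℝ) (hτ : 1 < τ) (heq : τ + τ⁻¹ = α) :
    IsSalem τ :=
  salem_of_totally_real_general α hirr hint hconj τ hτ heq
end

section
/- Let K = ℚ(τ) for some Salem number τ. Then there is a Salem number τ₁ ∈ K such that the set of Salem numbers contained in K is exactly the set of positive integer powers {τ₁ⁿ : n ≥ 1} of τ₁. -/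
open Polynomial IntermediateField ComplexConjugate

theorem eq_algebraMap_of_aeval_minpoly_eq_zero {F A B : Type*} [Field F] [Ring A] [IsDomain A]
    [Algebra F A] [Ring B] [Nontrivial B] [Algebra F B] {x : A} (hx : IsIntegral F x) {a : F}
    (h : aeval (algebraMap F B a) (minpoly F x) = 0) : x = algebraMap F A a := by
  rw [aeval_algebraMap_apply, map_eq_zero_iff _ (algebraMap F B).injective] at h
  have hmin : minpoly F x = X - C a :=
    (minpoly.eq_of_irreducible_of_monic (minpoly.irreducible hx) h (minpoly.monic hx)).trans
      (minpoly.eq_X_sub_C F a)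
  simpa [hmin, sub_eq_zero] using minpoly.aeval F x

theorem ncard_rootSet_minpoly {F A K : Type*} [Field F] [CharZero F] [Ring A] [IsDomain A]
    [Algebra F A] [Field K] [IsAlgClosed K] [Algebra F K] {x : A} (hx : IsIntegral F x) :
    ((minpoly F x).rootSet K).ncard = (minpoly F x).natDegree := by
  rw [← Nat.card_coe_set_eq, Nat.card_eq_fintype_card,
    card_rootSet_eq_natDegree (minpoly.irreducible hx).separable (IsAlgClosed.splits _)]

theorem Complex.norm_eq_one_of_conj_eq_inv {w : ℂ} (hw : w ≠ 0) (h : conj w = w⁻¹) : ‖w‖ = 1 := by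
  have : ‖w‖ ^ 2 = 1 := by
    rw [← Complex.ofReal_inj, Complex.ofReal_pow, ← Complex.mul_conj', h, mul_inv_cancel₀ hw,
      Complex.ofReal_one]
  exact (pow_left_inj₀ (norm_nonneg w) zero_le_one two_ne_zero).1 (by rwa [one_pow])

theorem IsConjugateOf.im_ne_zero {z : ℂ} {x : ℝ} (hz : IsConjugateOf z x) (hx : IsIntegral ℚ x)
    (hx1 : 1 < x) (hnorm : ‖z‖ = 1) : z.im ≠ 0 := by
  intro him
  obtain ⟨r, rfl⟩ : ∃ r : ℝ, z = r := ⟨z.re, Complex.ext rfl him⟩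
  rw [Complex.norm_real, Real.norm_eq_abs] at hnorm
  obtain ⟨q, hq1, rfl⟩ : ∃ q : ℚ, (q : ℝ) ≤ 1 ∧ r = q := by
    rcases (abs_eq zero_le_one).1 hnorm with rfl | rfl
    exacts [⟨1, by simp, by simp⟩, ⟨-1, by norm_num, by simp⟩]
  have hxq : x = q := by
    simpa using eq_algebraMap_of_aeval_minpoly_eq_zero (B := ℂ) hx (a := q)
      (by simpa [IsConjugateOf] using hz)
  linarith

theorem IsConjugateOf.conj {z : ℂ} {x : ℝ} (hz : IsConjugateOf z x) :
    IsConjugateOf (conj z) x := by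
  rw [IsConjugateOf, ← RingHom.toRatAlgHom_apply, aeval_algHom_apply]
  simp [show aeval z (minpoly ℚ x) = 0 from hz]

theorem four_le_natDegree_minpoly {x : ℝ} (hx : IsIntegral ℚ x) (hx1 : 1 < x)
    (hinv : IsConjugateOf (x : ℂ)⁻¹ x) {w : ℂ} (hw : IsConjugateOf w x) (him : w.im ≠ 0) :
    4 ≤ (minpoly ℚ x).natDegree := by
  have hroots : ({(x : ℂ), (x : ℂ)⁻¹} ∪ {w, conj w} : Set ℂ) ⊆ (minpoly ℚ x).rootSet ℂ := by
    have hx' : IsConjugateOf (x : ℂ) x := by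
      rw [IsConjugateOf, ← Complex.coe_algebraMap, aeval_algebraMap_apply, minpoly.aeval, map_zero]
    have hw' := hw.conj
    rintro z ((rfl | rfl) | (rfl | rfl)) <;>
      exact mem_rootSet.2 ⟨minpoly.ne_zero hx, by assumption⟩
  have hdisj : Disjoint ({(x : ℂ), (x : ℂ)⁻¹} : Set ℂ) {w, conj w} := by
    refine Set.disjoint_left.2 fun z hz hz' => ?_
    have hzim : z.im = 0 := by rcases hz with rfl | rfl <;> simp
    rcases hz' with rfl | rfl <;> simp_all
  have hxx : (x : ℂ) ≠ (x : ℂ)⁻¹ := by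
    exact_mod_cast ((inv_lt_one_of_one_lt₀ hx1).trans hx1).ne'
  have hww : w ≠ conj w := fun h => him (by simpa using Complex.conj_eq_iff_im.1 h.symm)
  have := Set.ncard_le_ncard hroots
  rwa [Set.ncard_union_eq hdisj, Set.ncard_pair hxx, Set.ncard_pair hww,
    ncard_rootSet_minpoly hx] at this

namespace IsSalem

variable {τ : ℝ}

theorem isIntegral_rat (hτ : IsSalem τ) : IsIntegral ℚ τ := hτ.2.1.tower_top

theorem isConjugateOf_inv (hτ : IsSalem τ) : IsConjugateOf (τ : ℂ)⁻¹ τ := hτ.2.2.2.1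

theorem norm_eq_one (hτ : IsSalem τ) {z : ℂ} (hz : IsConjugateOf z τ) (hzτ : z ≠ τ)
    (hzτ' : z ≠ (τ : ℂ)⁻¹) : ‖z‖ = 1 :=
  hτ.2.2.2.2 z hz hzτ hzτ'

theorem eq_or_eq_inv_of_im_eq_zero (hτ : IsSalem τ) {z : ℂ} (hz : IsConjugateOf z τ)
    (him : z.im = 0) : z = τ ∨ z = (τ : ℂ)⁻¹ := by
  by_contra! h
  exact hz.im_ne_zero hτ.isIntegral_rat hτ.1 (hτ.norm_eq_one hz h.1 h.2) him

theorem exists_isConjugateOf_im_ne_zero (hτ : IsSalem τ) :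
    ∃ z : ℂ, IsConjugateOf z τ ∧ z.im ≠ 0 := by
  by_contra! h
  have hsub : (minpoly ℚ τ).rootSet ℂ ⊆ {(τ : ℂ), (τ : ℂ)⁻¹} := fun z hz =>
    hτ.eq_or_eq_inv_of_im_eq_zero (mem_rootSet.1 hz).2 (h z (mem_rootSet.1 hz).2)
  have := (Set.ncard_le_ncard hsub).trans (Set.ncard_insert_le _ _)
  rw [ncard_rootSet_minpoly hτ.isIntegral_rat, Set.ncard_singleton] at this
  linarith [hτ.2.2.1]

end IsSalem

section AdjoinSimple

variable {τ : ℝ}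

theorem numberField_adjoin_simple (hτ : IsIntegral ℚ τ) : NumberField ℚ⟮τ⟯ :=
  have := adjoin.finiteDimensional hτ
  ⟨⟩

noncomputable def realEmbedding (τ : ℝ) : ℚ⟮τ⟯ →+* ℂ :=
  Complex.ofRealHom.comp (algebraMap ℚ⟮τ⟯ ℝ)

@[simp]
theorem realEmbedding_apply (x : ℚ⟮τ⟯) : realEmbedding τ x = ((x : ℝ) : ℂ) := rfl

theorem minpoly_coe (x : ℚ⟮τ⟯) : minpoly ℚ (x : ℝ) = minpoly ℚ x :=
  minpoly.algebraMap_eq (algebraMap ℚ⟮τ⟯ ℝ).injective x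

theorem isConjugateOf_apply (φ : ℚ⟮τ⟯ →+* ℂ) (x : ℚ⟮τ⟯) : IsConjugateOf (φ x) x := by
  rw [IsConjugateOf, minpoly_coe, ← RingHom.toRatAlgHom_apply, aeval_algHom_apply,
    minpoly.aeval, map_zero]

theorem exists_apply_eq_of_isConjugateOf (hτ : IsIntegral ℚ τ) {x : ℚ⟮τ⟯} {z : ℂ}
    (hz : IsConjugateOf z x) : ∃ φ : ℚ⟮τ⟯ →+* ℂ, φ x = z := by
  have := numberField_adjoin_simple hτ
  rw [← Set.mem_range, NumberField.Embeddings.range_eval_eq_rootSet_minpoly, mem_rootSet,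
    ← minpoly_coe]
  exact ⟨minpoly.ne_zero (Algebra.IsIntegral.isIntegral x).algebraMap, hz⟩

theorem ringHom_ext_adjoin_simple {A : Type*} [Ring A] [Algebra ℚ A] {φ ψ : ℚ⟮τ⟯ →+* A}
    (h : φ (AdjoinSimple.gen ℚ τ) = ψ (AdjoinSimple.gen ℚ τ)) : φ = ψ :=
  (RingHom.equivRatAlgHom _ _).injective <| adjoin_algHom_ext ℚ fun x hx => by
    rw [Set.mem_singleton_iff] at hx
    subst hx
    exact h

theorem exists_algHom_gen_eq_inv (hτ : IsIntegral ℚ τ) (hinv : IsConjugateOf (τ : ℂ)⁻¹ τ) :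
    ∃ ι : ℚ⟮τ⟯ →ₐ[ℚ] ℚ⟮τ⟯, ι (AdjoinSimple.gen ℚ τ) = (AdjoinSimple.gen ℚ τ)⁻¹ := by
  have hroot : (AdjoinSimple.gen ℚ τ)⁻¹ ∈ (minpoly ℚ τ).aroots ℚ⟮τ⟯ := by
    refine mem_aroots.2 ⟨minpoly.ne_zero hτ, (realEmbedding τ).injective ?_⟩
    unfold IsConjugateOf at hinv
    rw [map_zero, ← hinv, ← RingHom.toRatAlgHom_apply, ← aeval_algHom_apply]
    simp
  exact ⟨_, algHomAdjoinIntegralEquiv_symm_apply_gen ℚ hτ ⟨_, hroot⟩⟩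

end AdjoinSimple

theorem exists_isLeast_of_finite_Iic {α : Type*} [LinearOrder α] {A : Set α} {b : α}
    (hfin : (A ∩ Set.Iic b).Finite) (hb : b ∈ A) : ∃ a, IsLeast A a := by
  obtain ⟨a, ⟨haA, hab⟩, hmin⟩ := Set.exists_min_image _ id hfin ⟨b, hb, le_refl b⟩
  exact ⟨a, haA, fun x hx => (le_total x b).elim (fun hxb => hmin x ⟨hx, hxb⟩) (hab.trans ·)⟩

theorem mem_and_one_lt_iff_exists_pow_of_isLeast {S : Set ℝ}
    (hmul : ∀ a ∈ S, ∀ b ∈ S, a * b ∈ S) (hinv : ∀ a ∈ S, a⁻¹ ∈ S) {g₀ : ℝ}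
    (hg₀ : IsLeast {g | g ∈ S ∧ 1 < g} g₀) {g : ℝ} :
    g ∈ S ∧ 1 < g ↔ ∃ n, 1 ≤ n ∧ g = g₀ ^ n := by
  obtain ⟨⟨hg₀S, hg₀1⟩, hmin⟩ := hg₀
  constructor
  · rintro ⟨hg, hg1⟩
    obtain ⟨N, hN⟩ := pow_unbounded_of_one_lt g hg₀1
    induction N generalizing g with
    | zero => exact absurd hg1 (by simpa using hN.le)
    | succ N ih =>
      rcases (hmin ⟨hg, hg1⟩).eq_or_lt with rfl | hlt
      · exact ⟨1, le_rfl, (pow_one _).symm⟩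
      have hg₀pos : 0 < g₀ := zero_lt_one.trans hg₀1
      obtain ⟨n, hn, hquot⟩ := ih (hmul g hg g₀⁻¹ (hinv g₀ hg₀S))
        (by rwa [← div_eq_mul_inv, one_lt_div hg₀pos])
        (by rwa [← div_eq_mul_inv, div_lt_iff₀ hg₀pos, ← pow_succ])
      refine ⟨n + 1, by omega, ?_⟩
      rw [pow_succ, ← hquot, inv_mul_cancel_right₀ hg₀pos.ne']
  · rintro ⟨n, hn, rfl⟩
    refine ⟨?_, one_lt_pow₀ hg₀1 (by omega)⟩
    induction n, hn using Nat.le_induction with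
    | base => simpa using hg₀S
    | succ n _ ih => exact pow_succ g₀ n ▸ hmul _ ih _ hg₀S

section Reciprocal

variable {τ : ℝ} {ι : ℚ⟮τ⟯ →ₐ[ℚ] ℚ⟮τ⟯}

theorem apply_algHom_eq_conj (hι : ι (AdjoinSimple.gen ℚ τ) = (AdjoinSimple.gen ℚ τ)⁻¹)
    {φ : ℚ⟮τ⟯ →+* ℂ} (hφ : ‖φ (AdjoinSimple.gen ℚ τ)‖ = 1) (x : ℚ⟮τ⟯) :
    φ (ι x) = conj (φ x) := by
  have : φ.comp ι = (starRingEnd ℂ).comp φ :=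
    ringHom_ext_adjoin_simple (by simp [hι, map_inv₀, Complex.inv_eq_conj hφ])
  exact DFunLike.congr_fun this x

theorem norm_apply_eq_one_of_algHom_eq_inv
    (hι : ι (AdjoinSimple.gen ℚ τ) = (AdjoinSimple.gen ℚ τ)⁻¹)
    {φ : ℚ⟮τ⟯ →+* ℂ} (hφ : ‖φ (AdjoinSimple.gen ℚ τ)‖ = 1) {x : ℚ⟮τ⟯} (hx0 : x ≠ 0)
    (hx : ι x = x⁻¹) : ‖φ x‖ = 1 :=
  Complex.norm_eq_one_of_conj_eq_inv ((map_ne_zero φ).2 hx0)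
    (by rw [← apply_algHom_eq_conj hι hφ, hx, map_inv₀])

theorem IsSalem.eq_or_eq_comp_or_norm_gen_eq_one (hτ : IsSalem τ)
    (hι : ι (AdjoinSimple.gen ℚ τ) = (AdjoinSimple.gen ℚ τ)⁻¹) (φ : ℚ⟮τ⟯ →+* ℂ) :
    φ = realEmbedding τ ∨ φ = (realEmbedding τ).comp ι ∨ ‖φ (AdjoinSimple.gen ℚ τ)‖ = 1 := by
  by_cases h₁ : φ (AdjoinSimple.gen ℚ τ) = τ
  · exact Or.inl (ringHom_ext_adjoin_simple (by simpa using h₁))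
  by_cases h₂ : φ (AdjoinSimple.gen ℚ τ) = (τ : ℂ)⁻¹
  · exact Or.inr (Or.inl (ringHom_ext_adjoin_simple (by simp [hι, h₂])))
  exact Or.inr (Or.inr (hτ.norm_eq_one (isConjugateOf_apply φ _) h₁ h₂))

theorem IsSalem.im_apply_eq_zero_of_algHom_eq_self (hτ : IsSalem τ)
    (hι : ι (AdjoinSimple.gen ℚ τ) = (AdjoinSimple.gen ℚ τ)⁻¹) {x : ℚ⟮τ⟯} (hx : ι x = x)
    (φ : ℚ⟮τ⟯ →+* ℂ) : (φ x).im = 0 := by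
  rcases hτ.eq_or_eq_comp_or_norm_gen_eq_one hι φ with rfl | rfl | hφ
  · simp
  · simp [hx]
  · exact Complex.conj_eq_iff_im.1 (by rw [← apply_algHom_eq_conj hι hφ, hx])

def reciprocalUnits (ι : ℚ⟮τ⟯ →ₐ[ℚ] ℚ⟮τ⟯) : Set ℝ :=
  {g | 0 < g ∧ ∃ x : ℚ⟮τ⟯, (x : ℝ) = g ∧ IsIntegral ℤ x ∧ ι x = x⁻¹}

theorem reciprocalUnits_subset : reciprocalUnits ι ⊆ ℚ⟮τ⟯ :=
  fun _ ⟨_, x, hx, _⟩ => hx ▸ x.2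

theorem mul_mem_reciprocalUnits {a b : ℝ} (ha : a ∈ reciprocalUnits ι)
    (hb : b ∈ reciprocalUnits ι) : a * b ∈ reciprocalUnits ι := by
  obtain ⟨ha, x, rfl, hxi, hx⟩ := ha
  obtain ⟨hb, y, rfl, hyi, hy⟩ := hb
  exact ⟨mul_pos ha hb, x * y, rfl, hxi.mul hyi, by rw [map_mul, hx, hy, mul_inv]⟩

theorem inv_mem_reciprocalUnits {a : ℝ} (ha : a ∈ reciprocalUnits ι) :
    a⁻¹ ∈ reciprocalUnits ι := by
  obtain ⟨ha, x, rfl, hxi, hx⟩ := ha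
  exact ⟨inv_pos.2 ha, x⁻¹, rfl, hx ▸ hxi.map (ι : ℚ⟮τ⟯ →+* ℚ⟮τ⟯).toIntAlgHom,
    by rw [map_inv₀, hx]⟩

theorem IsSalem.mem_reciprocalUnits (hτ : IsSalem τ)
    (hι : ι (AdjoinSimple.gen ℚ τ) = (AdjoinSimple.gen ℚ τ)⁻¹) {σ : ℝ} (hσ : IsSalem σ)
    (hσK : σ ∈ ℚ⟮τ⟯) : σ ∈ reciprocalUnits ι := by
  lift σ to ℚ⟮τ⟯ using hσK with x
  refine ⟨zero_lt_one.trans hσ.1, x, rfl,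
    (isIntegral_algebraMap_iff (algebraMap ℚ⟮τ⟯ ℝ).injective).1 hσ.2.1, ?_⟩
  have hconj : IsConjugateOf (((ι x : ℚ⟮τ⟯) : ℝ) : ℂ) x :=
    isConjugateOf_apply ((realEmbedding τ).comp ι) x
  rcases hσ.eq_or_eq_inv_of_im_eq_zero hconj (Complex.ofReal_im _) with h | h
  · have hfix : ι x = x := Subtype.ext (by exact_mod_cast h)
    obtain ⟨z, hz, him⟩ := hσ.exists_isConjugateOf_im_ne_zero
    obtain ⟨φ, rfl⟩ := exists_apply_eq_of_isConjugateOf hτ.isIntegral_rat hz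
    exact absurd (hτ.im_apply_eq_zero_of_algHom_eq_self hι hfix φ) him
  · exact Subtype.ext (by exact_mod_cast h)

theorem IsSalem.of_mem_reciprocalUnits (hτ : IsSalem τ)
    (hι : ι (AdjoinSimple.gen ℚ τ) = (AdjoinSimple.gen ℚ τ)⁻¹) {g : ℝ}
    (hg : g ∈ reciprocalUnits ι) (hg1 : 1 < g) : IsSalem g := by
  obtain ⟨hpos, x, rfl, hxi, hx⟩ := hg
  have hx0 : x ≠ 0 := by rintro rfl; simp at hpos
  have hgi : IsIntegral ℚ (x : ℝ) := hxi.algebraMap.tower_top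
  have hinv : IsConjugateOf ((x : ℝ) : ℂ)⁻¹ x := by
    simpa [hx] using isConjugateOf_apply ((realEmbedding τ).comp ι) x
  have hdeg : 4 ≤ (minpoly ℚ (x : ℝ)).natDegree := by
    obtain ⟨z, hz, him⟩ := hτ.exists_isConjugateOf_im_ne_zero
    obtain ⟨φ, hφ⟩ :=
      exists_apply_eq_of_isConjugateOf hτ.isIntegral_rat (x := AdjoinSimple.gen ℚ τ) hz
    have hφ1 : ‖φ (AdjoinSimple.gen ℚ τ)‖ = 1 :=
      hφ ▸ hτ.norm_eq_one hz (fun h => him (by simp [h])) (fun h => him (by simp [h]))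
    have hw := isConjugateOf_apply φ x
    exact four_le_natDegree_minpoly hgi hg1 hinv hw
      (hw.im_ne_zero hgi hg1 (norm_apply_eq_one_of_algHom_eq_inv hι hφ1 hx0 hx))
  refine ⟨hg1, hxi.algebraMap, hdeg, hinv, fun z hz hzg hzg' => ?_⟩
  obtain ⟨φ, rfl⟩ := exists_apply_eq_of_isConjugateOf hτ.isIntegral_rat hz
  rcases hτ.eq_or_eq_comp_or_norm_gen_eq_one hι φ with rfl | rfl | hφ
  · exact absurd rfl hzg
  · exact absurd (by simp [hx]) hzg'
  · exact norm_apply_eq_one_of_algHom_eq_inv hι hφ hx0 hx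

theorem IsSalem.finite_reciprocalUnits (hτ : IsSalem τ)
    (hι : ι (AdjoinSimple.gen ℚ τ) = (AdjoinSimple.gen ℚ τ)⁻¹) (B : ℝ) :
    ({g | g ∈ reciprocalUnits ι ∧ 1 < g} ∩ Set.Iic B).Finite := by
  have := numberField_adjoin_simple hτ.isIntegral_rat
  refine ((NumberField.Embeddings.finite_of_norm_le ℚ⟮τ⟯ ℂ (max B 1)).image
    ((↑) : ℚ⟮τ⟯ → ℝ)).subset ?_
  rintro _ ⟨⟨⟨hpos, x, rfl, hxi, hx⟩, hg1⟩, hgB⟩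
  have hx0 : x ≠ 0 := by rintro rfl; simp at hpos
  refine ⟨x, ⟨hxi, fun φ => ?_⟩, rfl⟩
  rcases hτ.eq_or_eq_comp_or_norm_gen_eq_one hι φ with rfl | rfl | hφ
  · simpa [abs_of_pos hpos] using Or.inl hgB
  · simpa [hx, abs_of_pos hpos] using Or.inr (inv_le_one_of_one_le₀ hg1.le)
  · exact (norm_apply_eq_one_of_algHom_eq_inv hι hφ hx0 hx).trans_le (le_max_right _ _)

theorem IsSalem.isSalem_and_mem_iff (hτ : IsSalem τ)
    (hι : ι (AdjoinSimple.gen ℚ τ) = (AdjoinSimple.gen ℚ τ)⁻¹) (σ : ℝ) :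
    IsSalem σ ∧ σ ∈ ℚ⟮τ⟯ ↔ σ ∈ reciprocalUnits ι ∧ 1 < σ :=
  ⟨fun ⟨hσ, hσK⟩ => ⟨hτ.mem_reciprocalUnits hι hσ hσK, hσ.1⟩,
    fun ⟨hσ, hσ1⟩ => ⟨hτ.of_mem_reciprocalUnits hι hσ hσ1, reciprocalUnits_subset hσ⟩⟩

end Reciprocal

open IntermediateField in
theorem salem_numbers_in_field_are_powers (τ : ℝ) (hτ : IsSalem τ) :
    ∃ τ₁ : ℝ, IsSalem τ₁ ∧ τ₁ ∈ ℚ⟮τ⟯ ∧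
      ∀ σ : ℝ, (IsSalem σ ∧ σ ∈ ℚ⟮τ⟯) ↔ ∃ n : ℕ, 1 ≤ n ∧ σ = τ₁ ^ n := by
  obtain ⟨ι, hι⟩ := exists_algHom_gen_eq_inv hτ.isIntegral_rat hτ.isConjugateOf_inv
  have hchar := hτ.isSalem_and_mem_iff hι
  obtain ⟨τ₁, hτ₁⟩ := exists_isLeast_of_finite_Iic
    (hτ.finite_reciprocalUnits hι τ) ((hchar τ).1 ⟨hτ, mem_adjoin_simple_self ℚ τ⟩)
  obtain ⟨hτ₁S, hτ₁K⟩ := (hchar τ₁).2 hτ₁.1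
  exact ⟨τ₁, hτ₁S, hτ₁K, fun σ => (hchar σ).trans <| mem_and_one_lt_iff_exists_pow_of_isLeast
    (fun _ ha _ hb => mul_mem_reciprocalUnits ha hb) (fun _ ha => inv_mem_reciprocalUnits ha) hτ₁⟩
end

section
/- For every Salem number τ and every ε > 0 there exists a real number λ > 0 such that the distance ‖λτⁿ‖ from λτⁿ to the nearest integer is less than ε for all positive integers n. -/
/-- The distance from a real number to the nearest integer. -/
noncomputable def distNearestInt (x : ℝ) : ℝ := |x - round x|

open Polynomial IntermediateField

theorem IsIntegral.nodup_aroots_minpoly {K L F : Type*} [Field K] [CharZero K] [Field L]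
    [Algebra K L] [Field F] [Algebra K F] {x : L} (hx : IsIntegral K x) :
    ((minpoly K x).aroots F).Nodup :=
  nodup_roots (minpoly.irreducible hx).separable.map

theorem exists_int_eq_sum_pow_aroots_minpoly {K F : Type*} [Field K] [CharZero K] [Field F]
    [CharZero F] [IsAlgClosed F] {x : K} (hx : IsIntegral ℤ x) (N : ℕ) :
    ∃ k : ℤ, (((minpoly ℚ x).aroots F).map (· ^ N)).sum = k := by
  classical
  have hxℚ : IsIntegral ℚ x := hx.tower_top
  have : FiniteDimensional ℚ ℚ⟮x⟯ := adjoin.finiteDimensional hxℚ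
  have hgen : IsIntegral ℤ (AdjoinSimple.gen ℚ x) := by
    rwa [← isIntegral_algebraMap_iff (algebraMap ℚ⟮x⟯ K).injective,
      AdjoinSimple.algebraMap_gen]
  obtain ⟨k, hk⟩ := IsIntegrallyClosed.isIntegral_iff.mp
    (Algebra.isIntegral_trace (L := ℚ) (hgen.pow N))
  refine ⟨k, ?_⟩
  have hsum : ∑ σ : ℚ⟮x⟯ →ₐ[ℚ] F, σ (AdjoinSimple.gen ℚ x ^ N)
      = ∑ r : {r // r ∈ (minpoly ℚ x).aroots F}, (r : F) ^ N := by
    refine Fintype.sum_equiv (algHomAdjoinIntegralEquiv ℚ hxℚ) _ _ fun σ => ?_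
    conv_rhs => rw [← algHomAdjoinIntegralEquiv_symm_apply_gen ℚ hxℚ, Equiv.symm_apply_apply]
    exact map_pow σ _ N
  have htrace := trace_eq_sum_embeddings (K := ℚ) F (x := AdjoinSimple.gen ℚ x ^ N)
  rw [← hk, hsum, Finset.sum_mem_multiset _ _ (· ^ N) fun _ => rfl,
    ← Multiset.toFinset_eq hxℚ.nodup_aroots_minpoly] at htrace
  simpa using htrace.symm

theorem IsCompact.exists_lt_dist_lt {X : Type*} [PseudoMetricSpace X] {s : Set X}
    (hs : IsCompact s) {u : ℕ → X} (hu : ∀ n, u n ∈ s) {δ : ℝ} (hδ : 0 < δ) :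
    ∃ m m', m < m' ∧ dist (u m') (u m) < δ := by
  obtain ⟨_, -, φ, hφ, hlim⟩ := hs.tendsto_subseq hu
  obtain ⟨N, hN⟩ := Metric.cauchySeq_iff.mp hlim.cauchySeq δ hδ
  exact ⟨φ N, φ (N + 1), hφ N.lt_succ_self, hN _ N.le_succ _ le_rfl⟩

theorem Finset.exists_lt_forall_norm_pow_sub_pow_lt {𝕜 : Type*} [NormedDivisionRing 𝕜]
    [ProperSpace 𝕜] (s : Finset 𝕜) (hs : ∀ z ∈ s, ‖z‖ ≤ 1) {δ : ℝ} (hδ : 0 < δ) :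
    ∃ m m', m < m' ∧ ∀ z ∈ s, ‖z ^ m' - z ^ m‖ < δ := by
  have hmem (n : ℕ) : (fun z : s => (z : 𝕜) ^ n) ∈ Metric.closedBall 0 1 := by
    rw [mem_closedBall_zero_iff, pi_norm_le_iff_of_nonneg zero_le_one]
    exact fun z => (norm_pow (z : 𝕜) n).trans_le (pow_le_one₀ (norm_nonneg _) (hs z z.2))
  obtain ⟨m, m', hlt, hdist⟩ := (isCompact_closedBall _ _).exists_lt_dist_lt hmem hδ
  refine ⟨m, m', hlt, fun z hz => ?_⟩
  rw [← dist_eq_norm]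
  exact (dist_le_pi_dist _ _ ⟨z, hz⟩).trans_lt hdist

theorem Multiset.norm_sum_map_le_card_mul {ι E : Type*} [SeminormedAddCommGroup E]
    (s : Multiset ι) {f : ι → E} {C : ℝ} (h : ∀ i ∈ s, ‖f i‖ ≤ C) :
    ‖(s.map f).sum‖ ≤ card s * C := by
  refine (norm_multiset_sum_le _).trans ?_
  rw [Multiset.map_map, ← Multiset.card_map (‖f ·‖), ← nsmul_eq_mul]
  exact Multiset.sum_le_card_nsmul _ _ (by simpa using h)

theorem exists_pos_forall_distNearestInt_mul_pow_lt {τ : ℝ} (hτ : 1 < τ)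
    (hint : IsIntegral ℤ τ) (hconj : ∀ z ∈ ((minpoly ℚ τ).aroots ℂ).erase (τ : ℂ), ‖z‖ ≤ 1)
    {ε : ℝ} (hε : 0 < ε) :
    ∃ lam : ℝ, 0 < lam ∧ ∀ n : ℕ, distNearestInt (lam * τ ^ n) < ε := by
  set S := ((minpoly ℚ τ).aroots ℂ).erase (τ : ℂ)
  have hτ_mem : (τ : ℂ) ∈ (minpoly ℚ τ).aroots ℂ :=
    mem_aroots.mpr ⟨minpoly.ne_zero hint.tower_top, by
      simpa using aeval_algebraMap_apply ℂ τ (minpoly ℚ τ)⟩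
  have hpowsum (N : ℕ) : (((minpoly ℚ τ).aroots ℂ).map (· ^ N)).sum
      = (τ : ℂ) ^ N + (S.map (· ^ N)).sum := by
    rw [← Multiset.cons_erase hτ_mem, Multiset.map_cons, Multiset.sum_cons]
  set δ := ε / (Multiset.card S + 1)
  have hδ : 0 < δ := by positivity
  obtain ⟨m, m', hlt, hclose⟩ :=
    S.toFinset.exists_lt_forall_norm_pow_sub_pow_lt (by simpa using hconj) hδ
  refine ⟨τ ^ m' - τ ^ m, sub_pos.mpr (pow_lt_pow_right₀ hτ hlt), fun n => ?_⟩
  obtain ⟨k', hk'⟩ := exists_int_eq_sum_pow_aroots_minpoly (F := ℂ) hint (m' + n)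
  obtain ⟨k, hk⟩ := exists_int_eq_sum_pow_aroots_minpoly (F := ℂ) hint (m + n)
  have hdiff : (((k' - k : ℤ) - (τ ^ m' - τ ^ m) * τ ^ n : ℝ) : ℂ)
      = (S.map fun z => (z ^ m' - z ^ m) * z ^ n).sum := by
    have h₁ := hpowsum (m' + n)
    have h₂ := hpowsum (m + n)
    rw [hk'] at h₁
    rw [hk] at h₂
    simp only [Multiset.sum_map_sub, sub_mul, ← pow_add]
    push_cast
    linear_combination h₁ - h₂
  have hsmall : ‖(S.map fun z => (z ^ m' - z ^ m) * z ^ n).sum‖ < ε := by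
    refine (S.norm_sum_map_le_card_mul (C := δ) fun z hz => ?_).trans_lt ?_
    · rw [norm_mul, norm_pow]
      calc ‖z ^ m' - z ^ m‖ * ‖z‖ ^ n ≤ ‖z ^ m' - z ^ m‖ :=
            mul_le_of_le_one_right (norm_nonneg _) (pow_le_one₀ (norm_nonneg _) (hconj z hz))
        _ ≤ δ := (hclose z (Multiset.mem_toFinset.mpr hz)).le
    · rw [mul_div_assoc', div_lt_iff₀ (by positivity)]
      linarith
  calc distNearestInt ((τ ^ m' - τ ^ m) * τ ^ n)
      ≤ |(τ ^ m' - τ ^ m) * τ ^ n - (k' - k : ℤ)| := round_le _ _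
    _ = ‖(((k' - k : ℤ) - (τ ^ m' - τ ^ m) * τ ^ n : ℝ) : ℂ)‖ := by
        rw [Complex.norm_real, Real.norm_eq_abs, abs_sub_comm]
    _ < ε := hdiff ▸ hsmall

theorem IsSalem.norm_le_one_of_mem_aroots_erase {τ : ℝ} (hτ : IsSalem τ) {z : ℂ}
    (hz : z ∈ ((minpoly ℚ τ).aroots ℂ).erase (τ : ℂ)) : ‖z‖ ≤ 1 := by
  obtain ⟨hτ1, hint, -, -, hunit⟩ := hτ
  obtain ⟨hzτ, hroot⟩ := hint.tower_top.nodup_aroots_minpoly.mem_erase_iff.mp hz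
  by_cases hzinv : z = (τ : ℂ)⁻¹
  · rw [hzinv, norm_inv, Complex.norm_real, Real.norm_of_nonneg (by linarith)]
    exact inv_le_one_of_one_le₀ hτ1.le
  · exact (hunit z (mem_aroots.mp hroot).2 hzτ hzinv).le

theorem salem_powers_near_integers (τ : ℝ) (hτ : IsSalem τ) (ε : ℝ) (hε : 0 < ε) :
    ∃ lam : ℝ, 0 < lam ∧ ∀ n : ℕ, 1 ≤ n → distNearestInt (lam * τ ^ n) < ε := by
  obtain ⟨lam, hlam, hnear⟩ := exists_pos_forall_distNearestInt_mul_pow_lt hτ.1 hτ.2.1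
    (fun _ => hτ.norm_le_one_of_mem_aroots_erase) hε
  exact ⟨lam, hlam, fun n _ => hnear n⟩
end

section
/- For each ε > 0, the set of real numbers α > 1 such that ‖αⁿ‖ < ε for all integers n ≥ 0 is uncountable. -/
/-!
Take `δ < min ε 1` and consider the windows `{x ≥ 0 | c ≤ x ^ n ≤ c + δ}` with `c` an integer.
If the left end `l` of such a window is large (`l δ ≥ 2 + δ`), the window contains the next-level
windows `{x ≥ 0 | d ≤ x ^ (n + 1) ≤ d + δ}` for both `d = ⌈l ^ (n + 1)⌉` and `d = ⌈l ^ (n + 1)⌉ + 1`,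
and these two are disjoint. Choosing one of them at each level along a binary sequence gives nested
nonempty compact sets; distinct sequences give disjoint intersections, and every point `α` of an
intersection has `‖α ^ n‖ ≤ δ` for all `n`. So the set in question contains a copy of `ℕ → Bool`.
-/

open Set

def powerWindow (δ : ℝ) (n : ℕ) (c : ℝ) : Set ℝ :=
  {x | 0 ≤ x ∧ c ≤ x ^ n ∧ x ^ n ≤ c + δ}

namespace powerWindow

variable {δ c : ℝ} {n : ℕ}

theorem isClosed (δ : ℝ) (n : ℕ) (c : ℝ) : IsClosed (powerWindow δ n c) :=
  (isClosed_le continuous_const continuous_id).inter <|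
    (isClosed_le continuous_const (continuous_pow n)).inter
      (isClosed_le (continuous_pow n) continuous_const)

theorem isCompact_one (δ c : ℝ) : IsCompact (powerWindow δ 1 c) :=
  isCompact_Icc.of_isClosed_subset (isClosed δ 1 c) fun _ ⟨_, hcx, hxc⟩ =>
    ⟨by rwa [pow_one] at hcx, by rwa [pow_one] at hxc⟩

theorem rpow_inv_mem (hδ : 0 ≤ δ) (hc : 0 ≤ c) (hn : n ≠ 0) :
    c ^ (n⁻¹ : ℝ) ∈ powerWindow δ n c := by
  refine ⟨Real.rpow_nonneg hc _, ?_⟩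
  rw [Real.rpow_inv_natCast_pow hc hn]
  exact ⟨le_rfl, le_add_of_nonneg_right hδ⟩

theorem disjoint {c' : ℝ} (n : ℕ) (h : δ < |c - c'|) :
    Disjoint (powerWindow δ n c) (powerWindow δ n c') := by
  refine Set.disjoint_left.2 fun x hx hx' => h.not_ge ?_
  rw [abs_le]
  constructor <;> linarith [hx.2.1, hx.2.2, hx'.2.1, hx'.2.2]

/-- `x ^ (n + 1) ≤ l ^ (n + 1) + 2 + δ ≤ l (l ^ n + δ)` together with `x ≥ l` gives
`x ^ n ≤ l ^ n + δ`. -/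
theorem succ_subset {l d : ℝ} (hδ : 0 < δ) (hl : 2 + δ ≤ l * δ) (hld : l ^ (n + 1) ≤ d)
    (hdl : d ≤ l ^ (n + 1) + 2) : powerWindow δ (n + 1) d ⊆ powerWindow δ n (l ^ n) := by
  rintro x ⟨hx, hdx, hxd⟩
  have hl0 : 0 < l := pos_of_mul_pos_left (by linarith) hδ.le
  have hlx : l ≤ x := le_of_pow_le_pow_left₀ n.succ_ne_zero hx (hld.trans hdx)
  refine ⟨hx, pow_le_pow_left₀ hl0.le hlx n, le_of_mul_le_mul_left ?_ hl0⟩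
  calc l * x ^ n ≤ x * x ^ n := mul_le_mul_of_nonneg_right hlx (by positivity)
    _ = x ^ (n + 1) := by ring
    _ ≤ l * (l ^ n + δ) := by linarith [pow_succ l n]

end powerWindow

theorem distNearestInt_le_of_forall_mem_powerWindow {δ x : ℝ} (hδ : 0 ≤ δ) (c : ℕ → ℤ)
    (hx : ∀ k, x ∈ powerWindow δ (k + 1) (c k)) (n : ℕ) : distNearestInt (x ^ n) ≤ δ := by
  cases n with
  | zero => simpa [distNearestInt] using hδ
  | succ k =>
    obtain ⟨-, hcx, hxc⟩ := hx k
    refine (round_le _ (c k)).trans ?_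
    rw [abs_le]
    constructor <;> linarith

theorem not_countable_of_nested_binary_tree {X : Type*} [TopologicalSpace X] {S : Set X}
    (W : (ℕ → Bool) → ℕ → Set X) (hW_succ : ∀ b k, W b (k + 1) ⊆ W b k)
    (hW_nonempty : ∀ b k, (W b k).Nonempty) (hW_compact : ∀ b, IsCompact (W b 0))
    (hW_closed : ∀ b k, IsClosed (W b k))
    (hW_disjoint : ∀ b b' k, (∀ i < k, b i = b' i) → b k ≠ b' k →
      Disjoint (W b (k + 1)) (W b' (k + 1)))
    (hS : ∀ b, ⋂ k, W b k ⊆ S) : ¬ S.Countable := by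
  choose f hf using fun b => IsCompact.nonempty_iInter_of_sequence_nonempty_isCompact_isClosed
    (W b) (hW_succ b) (hW_nonempty b) (hW_compact b) (hW_closed b)
  have hf_inj : Function.Injective fun b => (⟨f b, hS b (hf b)⟩ : S) := by
    intro b b' h
    by_contra hne
    exact (hW_disjoint b b' _ (fun i => PiNat.apply_eq_of_lt_firstDiff)
      (PiNat.apply_firstDiff_ne hne)).ne_of_mem (mem_iInter.1 (hf b) _)
      (mem_iInter.1 (hf b') _) (congrArg Subtype.val h)
  have : Uncountable (ℕ → Bool) := by
    rw [← Cardinal.aleph0_lt_mk_iff]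
    simpa using Cardinal.aleph0_lt_continuum
  exact fun hS => have := hS.to_subtype; not_countable hf_inj.countable

/-- Along the branch `b`, `windowIndex A b k` is the integer `c` with `α ^ (k + 1) ∈ [c, c + δ]`. -/
noncomputable def windowIndex (A : ℤ) (b : ℕ → Bool) : ℕ → ℤ
  | 0 => A
  | k + 1 => ⌈((windowIndex A b k : ℝ) ^ ((k + 1 : ℕ) : ℝ)⁻¹) ^ (k + 2)⌉ + (b k).toNat

noncomputable def windowRoot (A : ℤ) (b : ℕ → Bool) (k : ℕ) : ℝ :=
  (windowIndex A b k : ℝ) ^ ((k + 1 : ℕ) : ℝ)⁻¹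

section windowIndex

variable {A : ℤ} {b b' : ℕ → Bool} {k : ℕ}

theorem windowIndex_succ : windowIndex A b (k + 1) = ⌈windowRoot A b k ^ (k + 2)⌉ + (b k).toNat :=
  rfl

theorem windowIndex_congr (h : ∀ i < k, b i = b' i) : windowIndex A b k = windowIndex A b' k := by
  induction k with
  | zero => rfl
  | succ k ih =>
    rw [windowIndex, windowIndex, ih fun i hi => h i (hi.trans k.lt_succ_self),
      h k k.lt_succ_self]

theorem abs_windowIndex_succ_sub (h : ∀ i < k, b i = b' i) (hk : b k ≠ b' k) :
    |(windowIndex A b (k + 1) : ℝ) - windowIndex A b' (k + 1)| = 1 := by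
  rw [windowIndex, windowIndex, windowIndex_congr h]
  cases hb : b k <;> cases hb' : b' k <;> simp_all

theorem le_windowRoot_of_pow_le (hA : 0 ≤ A) (h : (A : ℝ) ^ (k + 1) ≤ windowIndex A b k) :
    (A : ℝ) ≤ windowRoot A b k := by
  have hc : (0 : ℝ) ≤ windowIndex A b k := le_trans (by positivity) h
  rw [← Real.rpow_inv_natCast_pow hc k.succ_ne_zero] at h
  exact le_of_pow_le_pow_left₀ k.succ_ne_zero (Real.rpow_nonneg hc _) h

theorem pow_le_windowIndex (hA : 0 ≤ A) (b : ℕ → Bool) (k : ℕ) :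
    (A : ℝ) ^ (k + 1) ≤ windowIndex A b k := by
  induction k with
  | zero => simp [windowIndex]
  | succ k ih =>
    calc (A : ℝ) ^ (k + 2)
        ≤ windowRoot A b k ^ (k + 2) :=
          pow_le_pow_left₀ (by positivity) (le_windowRoot_of_pow_le hA ih) _
      _ ≤ ⌈windowRoot A b k ^ (k + 2)⌉ := Int.le_ceil _
      _ ≤ windowIndex A b (k + 1) :=
          Int.cast_le.2 (le_add_of_nonneg_right (Int.natCast_nonneg _))

theorem windowRoot_pow (hA : 0 ≤ A) : windowRoot A b k ^ (k + 1) = windowIndex A b k :=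
  Real.rpow_inv_natCast_pow (le_trans (by positivity) (pow_le_windowIndex hA b k))
    k.succ_ne_zero

theorem powerWindow_windowIndex_succ_subset {δ : ℝ} (hδ : 0 < δ) (hA : 2 + δ ≤ A * δ) :
    powerWindow δ (k + 2) (windowIndex A b (k + 1)) ⊆
      powerWindow δ (k + 1) (windowIndex A b k) := by
  have hA0 : 0 ≤ A := by
    exact_mod_cast (pos_of_mul_pos_left (by linarith) hδ.le : (0 : ℝ) < A).le
  have hl : 2 + δ ≤ windowRoot A b k * δ := hA.trans <| mul_le_mul_of_nonneg_right
    (le_windowRoot_of_pow_le hA0 (pow_le_windowIndex hA0 b k)) hδ.le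
  have hceil := Int.ceil_lt_add_one (windowRoot A b k ^ (k + 2))
  have hbit : ((b k).toNat : ℝ) ≤ 1 := by exact_mod_cast Bool.toNat_le (b k)
  rw [← windowRoot_pow (b := b) (k := k) hA0, windowIndex_succ]
  refine powerWindow.succ_subset hδ hl ?_ ?_ <;> push_cast
  · exact (Int.le_ceil _).trans (le_add_of_nonneg_right (Nat.cast_nonneg _))
  · linarith

end windowIndex

theorem uncountably_many_powers_near_integers (ε : ℝ) (hε : 0 < ε) :
    ¬ {α : ℝ | 1 < α ∧ ∀ n : ℕ, distNearestInt (α ^ n) < ε}.Countable := by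
  set δ := min (ε / 2) (1 / 2)
  have hδ : 0 < δ := lt_min (by linarith) (by norm_num)
  have hδε : δ < ε := (min_le_left _ _).trans_lt (by linarith)
  have hδ1 : δ < 1 := (min_le_right _ _).trans_lt (by norm_num)
  obtain ⟨A, hA⟩ := exists_nat_gt ((2 + δ) / δ)
  have hAδ : 2 + δ ≤ ((A : ℤ) : ℝ) * δ := by
    rw [div_lt_iff₀ hδ] at hA; push_cast; linarith
  refine not_countable_of_nested_binary_tree
    (fun b k => powerWindow δ (k + 1) (windowIndex A b k))
    (fun b k => powerWindow_windowIndex_succ_subset hδ hAδ)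
    (fun b k => ⟨_, powerWindow.rpow_inv_mem hδ.le ?_ k.succ_ne_zero⟩)
    (fun b => powerWindow.isCompact_one δ _) (fun b k => powerWindow.isClosed δ _ _)
    (fun b b' k h hk => powerWindow.disjoint _ (by rwa [abs_windowIndex_succ_sub h hk]))
    fun b x hx => ?_
  · exact le_trans (by positivity) (pow_le_windowIndex (Int.natCast_nonneg A) b k)
  rw [mem_iInter] at hx
  refine ⟨?_, fun n => (distNearestInt_le_of_forall_mem_powerWindow hδ.le _ hx n).trans_lt hδε⟩
  have hAx : ((A : ℤ) : ℝ) ≤ x := by simpa [windowIndex] using (hx 0).2.1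
  nlinarith
end

section
/- If m ≥ 2 and τ₁, τ₂, …, τ_m are Salem numbers, then the sum τ₁ + τ₂ + ⋯ + τ_m is not a Salem number. -/
/-! If `s = τ₁ + ⋯ + τₘ` were a Salem number, some automorphism `g` of the normal field of
algebraic numbers would send `s` to `s⁻¹`. An automorphism `σ` fixing `s` fixes every `τᵢ`: each
conjugate `σ τᵢ` has modulus at most `τᵢ`, so `∑ σ τᵢ = ∑ τᵢ` forces `σ τᵢ = τᵢ`. Applied to `g²`
and to `(c g)²`, with `c` complex conjugation, this shows that every `g τᵢ` is real, hence equal to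
`τᵢ` or `τᵢ⁻¹`. But then `∑ g τᵢ ≥ τ₁⁻¹ > s⁻¹` because `m ≥ 2`. -/

open Polynomial Finset ComplexConjugate
open scoped ComplexOrder

lemma IsConjugateOf.natDegree_minpoly_eq_one {τ : ℝ} (hτ : IsIntegral ℚ τ) {q : ℚ}
    (hq : IsConjugateOf q τ) : (minpoly ℚ τ).natDegree = 1 := by
  have hroot : (minpoly ℚ τ).IsRoot q := by
    rw [IsConjugateOf, ← eq_ratCast (algebraMap ℚ ℂ), aeval_algebraMap_apply,
      map_eq_zero] at hq
    simpa [aeval_def, eval₂_id] using hq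
  exact natDegree_eq_of_degree_eq_some
    (degree_eq_one_of_irreducible_of_root (minpoly.irreducible hτ) hroot)

namespace IsSalem

variable {τ : ℝ}

lemma isConjugateOf_cases (hτ : IsSalem τ) {z : ℂ} (hz : IsConjugateOf z τ) :
    z = τ ∨ z = (τ : ℂ)⁻¹ ∨ ‖z‖ = 1 := by
  by_cases h₁ : z = τ
  · exact .inl h₁
  by_cases h₂ : z = (τ : ℂ)⁻¹
  · exact .inr (.inl h₂)
  exact .inr (.inr (hτ.2.2.2.2 z hz h₁ h₂))

lemma norm_le_of_isConjugateOf (hτ : IsSalem τ) {z : ℂ} (hz : IsConjugateOf z τ) :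
    ‖z‖ ≤ τ := by
  have h₀ : 0 < τ := one_pos.trans hτ.1
  rcases hτ.isConjugateOf_cases hz with rfl | rfl | h
  · rw [Complex.norm_real, Real.norm_of_nonneg h₀.le]
  · rw [norm_inv, Complex.norm_real, Real.norm_of_nonneg h₀.le]
    exact (inv_lt_one_of_one_lt₀ hτ.1).le.trans hτ.1.le
  · exact h ▸ hτ.1.le

lemma eq_or_eq_inv_of_isConjugateOf_ofReal (hτ : IsSalem τ) {x : ℝ}
    (hx : IsConjugateOf x τ) : x = τ ∨ x = τ⁻¹ := by
  rcases hτ.isConjugateOf_cases hx with h | h | h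
  · exact .inl (mod_cast h)
  · exact .inr (mod_cast h)
  · -- `±1` is not a conjugate, since the minimal polynomial of `τ` has degree at least 4.
    have hdeg := hτ.2.2.1
    rw [Complex.norm_real, Real.norm_eq_abs] at h
    have hint : IsIntegral ℚ τ := hτ.2.1.tower_top
    rcases abs_eq (zero_le_one' ℝ) |>.1 h with rfl | rfl
    · have := IsConjugateOf.natDegree_minpoly_eq_one hint (q := 1) (by simpa using hx)
      omega
    · have := IsConjugateOf.natDegree_minpoly_eq_one hint (q := -1) (by simpa using hx)
      omega

end IsSalem

namespace IntermediateField

variable {L : IntermediateField ℚ ℂ}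

lemma isConjugateOf_iff_minpoly_eq [Algebra.IsAlgebraic ℚ L] {x y : L} {τ : ℝ}
    (hx : (x : ℂ) = τ) : IsConjugateOf y τ ↔ minpoly ℚ x = minpoly ℚ y := by
  have hmin : minpoly ℚ τ = minpoly ℚ x := by
    rw [← minpoly.algebraMap_eq (algebraMap ℝ ℂ).injective,
      ← minpoly.algebraMap_eq L.val.injective]
    exact congrArg _ hx.symm
  rw [minpoly.eq_iff_aeval_minpoly_eq_zero (Algebra.IsIntegral.isIntegral x), IsConjugateOf, hmin,
    ← map_eq_zero_iff L.val L.val.injective, ← aeval_algHom_apply]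
  rfl

lemma isConjugateOf_iff_exists_algEquiv [Normal ℚ L] {x y : L} {τ : ℝ} (hx : (x : ℂ) = τ) :
    IsConjugateOf y τ ↔ ∃ σ : L ≃ₐ[ℚ] L, σ x = y := by
  rw [isConjugateOf_iff_minpoly_eq hx, eq_comm, Normal.minpoly_eq_iff_mem_orbit]
  rfl

noncomputable def complexConj (L : IntermediateField ℚ ℂ) [Normal ℚ L] : L ≃ₐ[ℚ] L :=
  (Complex.conjAe.restrictScalars ℚ).restrictNormal L

lemma coe_complexConj_apply [Normal ℚ L] (x : L) : (complexConj L x : ℂ) = conj (x : ℂ) :=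
  AlgEquiv.restrictNormal_commutes _ L x

end IntermediateField

lemma Complex.eq_ofReal_of_norm_le_of_sum_eq {ι : Type*} [Fintype ι] {z : ι → ℂ} {r : ι → ℝ}
    (hle : ∀ i, ‖z i‖ ≤ r i) (hsum : ∑ i, z i = ∑ i, (r i : ℂ)) (i : ι) : z i = r i := by
  have hre : ∀ i, (z i).re ≤ r i := fun i => (re_le_norm _).trans (hle i)
  have hre_eq : ∀ i, (z i).re = r i := by
    have := congrArg re hsum
    simp only [re_sum, ofReal_re] at this
    simpa using (sum_eq_sum_iff_of_le fun i _ => hre i).1 this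
  have hnonneg : 0 ≤ z i := re_eq_norm.1 <| le_antisymm (re_le_norm _) (hre_eq i ▸ hle i)
  rw [eq_re_of_ofReal_le (r := 0) (z := z i) (by simpa using hnonneg), hre_eq i]

section SalemSum

open IntermediateField

variable {ι : Type*} [Fintype ι] {τ : ι → ℝ} {L : IntermediateField ℚ ℂ} [Normal ℚ L] {t : ι → L}

lemma algEquiv_apply_eq_of_apply_sum_eq (hτ : ∀ i, IsSalem (τ i)) (ht : ∀ i, (t i : ℂ) = τ i)
    {σ : L ≃ₐ[ℚ] L} (hσ : σ (∑ i, t i) = ∑ i, t i) (i : ι) : σ (t i) = t i := by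
  have hconj (i : ι) : IsConjugateOf (σ (t i)) (τ i) :=
    (isConjugateOf_iff_exists_algEquiv (ht i)).2 ⟨σ, rfl⟩
  have hsum : ∑ i, (σ (t i) : ℂ) = ∑ i, (τ i : ℂ) := by
    simpa [ht] using congrArg ((↑) : L → ℂ) hσ
  refine Subtype.ext ((ht i).symm ▸ ?_)
  exact Complex.eq_ofReal_of_norm_le_of_sum_eq
    (fun i => (hτ i).norm_le_of_isConjugateOf (hconj i)) hsum i

lemma conj_algEquiv_apply_eq (hτ : ∀ i, IsSalem (τ i)) (ht : ∀ i, (t i : ℂ) = τ i)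
    {g : L ≃ₐ[ℚ] L} (hg : g (∑ i, t i) = (∑ i, t i)⁻¹) (i : ι) :
    conj (g (t i) : ℂ) = g (t i) := by
  set s := ∑ i, t i
  set c := complexConj L
  have hc (x : L) (hx : conj (x : ℂ) = x) : c x = x :=
    Subtype.ext ((coe_complexConj_apply x).trans hx)
  have hcs : c s = s := hc s (by simp [s, ht])
  have hct : c (t i) = t i := hc _ (by simp [ht])
  -- `g²` and `(c g)²` both fix the real number `s`, hence every `t i`.
  have hg2 : g (g (t i)) = t i :=
    algEquiv_apply_eq_of_apply_sum_eq hτ ht (σ := g.trans g)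
      (show g (g s) = s by rw [hg, map_inv₀, hg, inv_inv]) i
  have hcg2 : c (g (c (g (t i)))) = t i :=
    algEquiv_apply_eq_of_apply_sum_eq hτ ht (σ := (g.trans c).trans (g.trans c))
      (show c (g (c (g s))) = s by simp only [hg, map_inv₀, hcs, inv_inv]) i
  have : c (g (t i)) = g (t i) :=
    g.injective (c.injective (by rw [hcg2, hg2, hct]))
  rw [← coe_complexConj_apply, this]

lemma exists_algEquiv_apply_eq_ofReal (hτ : ∀ i, IsSalem (τ i)) (ht : ∀ i, (t i : ℂ) = τ i)
    {g : L ≃ₐ[ℚ] L} (hg : g (∑ i, t i) = (∑ i, t i)⁻¹) (i : ι) :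
    ∃ v : ℝ, (g (t i) : ℂ) = v ∧ (v = τ i ∨ v = (τ i)⁻¹) := by
  have hreal : ((g (t i) : ℂ).re : ℂ) = g (t i) :=
    Complex.conj_eq_iff_re.1 (conj_algEquiv_apply_eq hτ ht hg i)
  refine ⟨_, hreal.symm, (hτ i).eq_or_eq_inv_of_isConjugateOf_ofReal ?_⟩
  exact hreal ▸ (isConjugateOf_iff_exists_algEquiv (ht i)).2 ⟨g, rfl⟩

end SalemSum

lemma inv_sum_lt_sum_of_forall_eq_or_eq_inv {ι : Type*} [Fintype ι] [Nontrivial ι] {τ v : ι → ℝ}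
    (hτ : ∀ i, 1 < τ i) (hv : ∀ i, v i = τ i ∨ v i = (τ i)⁻¹) : (∑ i, τ i)⁻¹ < ∑ i, v i := by
  classical
  obtain ⟨j, k, hjk⟩ := exists_pair_ne ι
  have hpos (i : ι) : 0 < τ i := one_pos.trans (hτ i)
  have hv_ge (i : ι) : (τ i)⁻¹ ≤ v i := by
    rcases hv i with h | h
    · exact h ▸ (inv_lt_one_of_one_lt₀ (hτ i)).le.trans (hτ i).le
    · exact h.ge
  have hτj : τ j < ∑ i, τ i := calc
    τ j < τ j + τ k := lt_add_of_pos_right _ (hpos k)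
    _ = ∑ i ∈ {j, k}, τ i := (sum_pair hjk).symm
    _ ≤ ∑ i, τ i := sum_le_univ_sum_of_nonneg fun i => (hpos i).le
  calc (∑ i, τ i)⁻¹ < (τ j)⁻¹ := inv_strictAnti₀ (hpos j) hτj
    _ ≤ v j := hv_ge j
    _ ≤ ∑ i, v i := single_le_sum (fun i _ => (inv_pos.2 (hpos i)).le.trans (hv_ge i)) (mem_univ j)

theorem sum_of_salem_not_salem (m : ℕ) (hm : 2 ≤ m) (τ : Fin m → ℝ)
    (hτ : ∀ i, IsSalem (τ i)) :
    ¬ IsSalem (∑ i, τ i) := by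
  intro hS
  have : Nontrivial (Fin m) := Fin.nontrivial_iff_two_le.2 hm
  -- provides `Normal ℚ (algebraicClosure ℚ ℂ)`
  have : IsAlgClosure ℚ (algebraicClosure ℚ ℂ) := algebraicClosure.isAlgClosure ℚ ℂ
  let t (i : Fin m) : algebraicClosure ℚ ℂ :=
    ⟨τ i, (hτ i).2.1.tower_top.algebraMap (B := ℂ)⟩
  have ht (i : Fin m) : (t i : ℂ) = τ i := rfl
  have hs : ((∑ i, t i : algebraicClosure ℚ ℂ) : ℂ) = ↑(∑ i, τ i) := by push_cast; rfl
  obtain ⟨g, hg⟩ : ∃ g : algebraicClosure ℚ ℂ ≃ₐ[ℚ] algebraicClosure ℚ ℂ,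
      g (∑ i, t i) = (∑ i, t i)⁻¹ :=
    (IntermediateField.isConjugateOf_iff_exists_algEquiv hs).1 (by simpa using hS.2.2.2.1)
  choose v hgv hv using exists_algEquiv_apply_eq_ofReal hτ ht hg
  have hvsum : ∑ i, v i = (∑ i, τ i)⁻¹ := by
    apply Complex.ofReal_injective
    simp only [Complex.ofReal_sum, Complex.ofReal_inv, ← hgv, ← hs]
    rw [← IntermediateField.coe_inv, ← hg, map_sum, IntermediateField.coe_sum]
  exact (inv_sum_lt_sum_of_forall_eq_or_eq_inv (fun i => (hτ i).1) hv).ne' hvsum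
end
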